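/- Suppose φ̄ : (Fin n → ℝ) → ℝ is differentiable and satisfies the steady-state HJB equation with state cost m, i.e. for all x: ∇φ̄(x) ⬝ᵥ f(x) − (1/4)·((g x)ᵀ.mulVec (∇φ̄ x)) ⬝ᵥ (R⁻¹.mulVec ((g x)ᵀ.mulVec (∇φ̄ x))) + m(x) = 0. Let ε > 0, define the scaled feedback u_ε(y) := (1/2 + ε)·(−(1/2)·R⁻¹.mulVec ((g y)ᵀ.mulVec (∇φ̄ y))), and let x : ℝ → (Fin n → ℝ) be differentiable and solve x'(t) = f(x(t)) + (g (x t)).mulVec (u_ε (x t)) for all t. Then for every t, the composite t ↦ φ̄(x(t)) has derivative at t equal to −m(x(t)) − (ε/2)·‖R⁻¹.mulVec ((g (x t))ᵀ.mulVec (∇φ̄ (x t)))‖²_R. In particular, if m(y) ≥ 0 for all y, this derivative is ≤ 0 for all t. -/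

import Mathlib

open Matrix

/-- Euclidean gradient of a scalar function on `Fin n → ℝ`:
the vector of partial derivatives. -/
noncomputable def grad {n : ℕ} (φ : (Fin n → ℝ) → ℝ) (x : Fin n → ℝ) : Fin n → ℝ :=
  fun i => fderiv ℝ φ x (Pi.single i 1)

/-- `R`-weighted squared norm `‖u‖²_R = u ⬝ᵥ R.mulVec u`. -/
def sqR {p : ℕ} (R : Matrix (Fin p) (Fin p) ℝ) (u : Fin p → ℝ) : ℝ :=
  u ⬝ᵥ R.mulVec u

/-! Along the closed loop, `d/dt φ̄(x t) = ∇φ̄ ⬝ᵥ f + ∇φ̄ ⬝ᵥ g u_ε`. Writing `q = w ⬝ᵥ R⁻¹ w` with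
`w = gᵀ ∇φ̄`, the HJB equation turns the drift term into `q/4 - m`, while the scaled feedback
contributes `-(1/4 + ε/2) q`; what is left is `-m - (ε/2) q`, and `q = ‖R⁻¹ w‖²_R`. -/

theorem fderiv_apply_eq_grad_dotProduct {n : ℕ} (φ : (Fin n → ℝ) → ℝ) (x v : Fin n → ℝ) :
    fderiv ℝ φ x v = grad φ x ⬝ᵥ v := by
  conv_lhs => rw [← Finset.univ_sum_single v]
  simp only [map_sum, grad, dotProduct]
  refine Finset.sum_congr rfl fun i _ => ?_
  rw [mul_comm, ← smul_eq_mul, ← map_smul, ← Pi.single_smul', smul_eq_mul, mul_one]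

theorem hasDerivAt_comp_grad_dotProduct {n : ℕ} {φ : (Fin n → ℝ) → ℝ} {x : ℝ → Fin n → ℝ}
    {v : Fin n → ℝ} {t : ℝ} (hφ : DifferentiableAt ℝ φ (x t)) (hx : HasDerivAt x v t) :
    HasDerivAt (fun s => φ (x s)) (grad φ (x t) ⬝ᵥ v) t := by
  rw [← fderiv_apply_eq_grad_dotProduct]
  exact hφ.hasFDerivAt.comp_hasDerivAt t hx

theorem sqR_inv_mulVec {p : ℕ} {R : Matrix (Fin p) (Fin p) ℝ} (hR : IsUnit R.det)
    (w : Fin p → ℝ) : sqR R (R⁻¹ *ᵥ w) = w ⬝ᵥ R⁻¹ *ᵥ w := by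
  rw [sqR, mulVec_mulVec, mul_nonsing_inv R hR, one_mulVec, dotProduct_comm]

theorem sqR_nonneg {p : ℕ} {R : Matrix (Fin p) (Fin p) ℝ} (hR : R.PosSemidef)
    (u : Fin p → ℝ) : 0 ≤ sqR R u :=
  hR.dotProduct_mulVec_nonneg u

theorem dotProduct_mulVec_smul_feedback {ι : Type*} [Fintype ι] {p : ℕ}
    (G : Matrix ι (Fin p) ℝ) (R : Matrix (Fin p) (Fin p) ℝ) (a : ι → ℝ) (c : ℝ) :
    a ⬝ᵥ G *ᵥ (c • (-(1/2 : ℝ)) • R⁻¹ *ᵥ (Gᵀ *ᵥ a))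
      = -(c / 2) * (Gᵀ *ᵥ a ⬝ᵥ R⁻¹ *ᵥ (Gᵀ *ᵥ a)) := by
  rw [dotProduct_mulVec, ← mulVec_transpose, smul_smul, dotProduct_smul, smul_eq_mul]
  ring

theorem dotProduct_add_mulVec_scaledFeedback_of_hjb {ι : Type*} [Fintype ι] {p : ℕ}
    (G : Matrix ι (Fin p) ℝ) {R : Matrix (Fin p) (Fin p) ℝ} (hR : IsUnit R.det)
    (a v : ι → ℝ) (mx ε : ℝ)
    (hHJB : a ⬝ᵥ v - (1/4) * (Gᵀ *ᵥ a ⬝ᵥ R⁻¹ *ᵥ (Gᵀ *ᵥ a)) + mx = 0) :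
    a ⬝ᵥ (v + G *ᵥ ((1/2 + ε) • (-(1/2 : ℝ)) • R⁻¹ *ᵥ (Gᵀ *ᵥ a)))
      = -mx - (ε / 2) * sqR R (R⁻¹ *ᵥ (Gᵀ *ᵥ a)) := by
  rw [dotProduct_add, dotProduct_mulVec_smul_feedback, sqR_inv_mulVec hR]
  linarith

theorem stmt_10_general {n p : ℕ}
    (f : (Fin n → ℝ) → (Fin n → ℝ))
    (g : (Fin n → ℝ) → Matrix (Fin n) (Fin p) ℝ)
    (R : Matrix (Fin p) (Fin p) ℝ)
    (hRpd : R.PosDef)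
    (m : (Fin n → ℝ) → ℝ)
    (φb : (Fin n → ℝ) → ℝ)
    (hφ : Differentiable ℝ φb)
    (hHJB : ∀ x, grad φb x ⬝ᵥ f x
        - (1/4) * ((g x)ᵀ.mulVec (grad φb x) ⬝ᵥ R⁻¹.mulVec ((g x)ᵀ.mulVec (grad φb x)))
        + m x = 0)
    (ε : ℝ) (hε : 0 < ε)
    (uε : (Fin n → ℝ) → (Fin p → ℝ))
    (huε : ∀ y, uε y = (1/2 + ε) • (-(1/2 : ℝ) • R⁻¹.mulVec ((g y)ᵀ.mulVec (grad φb y))))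
    (x : ℝ → (Fin n → ℝ))
    (hx : ∀ t, HasDerivAt x (f (x t) + (g (x t)).mulVec (uε (x t))) t) :
    ∀ t, HasDerivAt (fun s => φb (x s))
        (-(m (x t)) - (ε/2) * sqR R (R⁻¹.mulVec ((g (x t))ᵀ.mulVec (grad φb (x t))))) t
      ∧ ((∀ y, 0 ≤ m y) →
          -(m (x t)) - (ε/2) * sqR R (R⁻¹.mulVec ((g (x t))ᵀ.mulVec (grad φb (x t)))) ≤ 0) := by
  intro t
  have hR : IsUnit R.det := isUnit_iff_ne_zero.mpr hRpd.det_pos.ne'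
  have hderiv := hasDerivAt_comp_grad_dotProduct (hφ (x t)) (hx t)
  rw [huε, dotProduct_add_mulVec_scaledFeedback_of_hjb _ hR _ _ _ _ (hHJB (x t))] at hderiv
  refine ⟨hderiv, fun hm => ?_⟩
  have := mul_nonneg (half_pos hε).le
    (sqR_nonneg hRpd.posSemidef (R⁻¹ *ᵥ ((g (x t))ᵀ *ᵥ grad φb (x t))))
  linarith [hm (x t)]

theorem stmt_10 {n p : ℕ}
    (f : (Fin n → ℝ) → (Fin n → ℝ))
    (g : (Fin n → ℝ) → Matrix (Fin n) (Fin p) ℝ)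
    (R : Matrix (Fin p) (Fin p) ℝ)
    (hRsymm : R.IsSymm) (hRpd : R.PosDef)
    (m : (Fin n → ℝ) → ℝ)
    (φb : (Fin n → ℝ) → ℝ)
    (hφ : Differentiable ℝ φb)
    (hHJB : ∀ x, grad φb x ⬝ᵥ f x
        - (1/4) * ((g x)ᵀ.mulVec (grad φb x) ⬝ᵥ R⁻¹.mulVec ((g x)ᵀ.mulVec (grad φb x)))
        + m x = 0)
    (ε : ℝ) (hε : 0 < ε)
    (uε : (Fin n → ℝ) → (Fin p → ℝ))
    (huε : ∀ y, uε y = (1/2 + ε) • (-(1/2 : ℝ) • R⁻¹.mulVec ((g y)ᵀ.mulVec (grad φb y))))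
    (x : ℝ → (Fin n → ℝ))
    (hx : ∀ t, HasDerivAt x (f (x t) + (g (x t)).mulVec (uε (x t))) t) :
    ∀ t, HasDerivAt (fun s => φb (x s))
        (-(m (x t)) - (ε/2) * sqR R (R⁻¹.mulVec ((g (x t))ᵀ.mulVec (grad φb (x t))))) t
      ∧ ((∀ y, 0 ≤ m y) →
          -(m (x t)) - (ε/2) * sqR R (R⁻¹.mulVec ((g (x t))ᵀ.mulVec (grad φb (x t)))) ≤ 0) :=
  stmt_10_general f g R hRpd m φb hφ hHJB ε hε uε huε x hx
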